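/- Let (y_i, m_i, w_i), 1 ≤ i ≤ n, be a weighted sample with w_i > 0 and Σ w_i y_i > 0, and let g : ℝ → ℝ be strictly increasing. Then a permutation σ of {1,…,n} satisfies m_{σ(1)} ≥ … ≥ m_{σ(n)} with a given suborder of the responses within prediction ties if and only if it does so for the transformed predictions g(m_1), …, g(m_n); consequently the best-case and worst-case CAP areas, and hence the Gini score, are invariant: Gini(y_i, g(m_i), w_i) = Gini(y_i, m_i, w_i). In particular, shifted estimates a + m_i (a ∈ ℝ) yield the identical Gini score. -/

import Mathlib

/-- Partial sum `Σ_{j=1}^i f_j` of the first `i` entries of `f : Fin n → ℝ`. -/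
noncomputable def psum {n : ℕ} (f : Fin n → ℝ) (i : ℕ) : ℝ :=
  ∑ j ∈ Finset.univ.filter (fun j : Fin n => (j : ℕ) < i), f j

/-- `σ` sorts the predictions `m` decreasingly with responses `y` ordered decreasingly
within prediction ties (best-case tie-breaking). -/
def SortDown {n : ℕ} (m y : Fin n → ℝ) (σ : Equiv.Perm (Fin n)) : Prop :=
  Antitone (fun i : Fin n => m (σ i)) ∧
    ∀ j k : Fin n, j < k → m (σ j) = m (σ k) → y (σ k) ≤ y (σ j)

/-- `σ` sorts the predictions `m` decreasingly with responses `y` ordered increasingly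
within prediction ties (worst-case tie-breaking). -/
def SortUp {n : ℕ} (m y : Fin n → ℝ) (σ : Equiv.Perm (Fin n)) : Prop :=
  Antitone (fun i : Fin n => m (σ i)) ∧
    ∀ j k : Fin n, j < k → m (σ j) = m (σ k) → y (σ j) ≤ y (σ k)

/-- Trapezoidal area between the diagonal and the piecewise-linear curve through the
weighted corner set `((1/W) Σ_{j≤i} w_{σ(j)}, (1/T) Σ_{j≤i} w_{σ(j)} y_{σ(j)})`. -/
noncomputable def capArea {n : ℕ} (y w : Fin n → ℝ) (W T : ℝ) (σ : Equiv.Perm (Fin n)) : ℝ :=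
  (∑ i ∈ Finset.range n,
    ((1 / T) * psum (fun j => w (σ j) * y (σ j)) (i + 1)
        + (1 / T) * psum (fun j => w (σ j) * y (σ j)) i)
      * ((1 / W) * psum (fun j => w (σ j)) (i + 1)
        - (1 / W) * psum (fun j => w (σ j)) i) / 2) - 1 / 2

lemma psum_succ {n : ℕ} (f : Fin n → ℝ) (i : Fin n) :
    psum f ((i : ℕ) + 1) = psum f (i : ℕ) + f i := by
  unfold psum
  have h : Finset.univ.filter (fun j : Fin n => (j : ℕ) < (i : ℕ) + 1)
      = insert i (Finset.univ.filter (fun j : Fin n => (j : ℕ) < (i : ℕ))) := by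
    ext j
    simp [Fin.ext_iff]
    omega
  rw [h, Finset.sum_insert (by simp)]
  ring

lemma sum_core {n : ℕ} (u v : Fin n → ℝ) :
    ∑ i : Fin n, (2 * psum v ↑i + v i) * u i
      = (∑ i, v i) * (∑ i, u i)
        + ∑ i : Fin n, ∑ j : Fin n, (if (j : ℕ) < (i : ℕ) then v j * u i - v i * u j else 0) := by
  have hA : ∑ i : Fin n, psum v ↑i * u i
      = ∑ i : Fin n, ∑ j : Fin n, (if (j : ℕ) < (i : ℕ) then v j * u i else 0) := by
    apply Finset.sum_congr rfl; intro i _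
    unfold psum; rw [Finset.sum_mul, Finset.sum_filter]
  have hL : ∑ i : Fin n, (2 * psum v ↑i + v i) * u i
      = 2 * (∑ i : Fin n, psum v ↑i * u i) + ∑ i : Fin n, v i * u i := by
    rw [Finset.mul_sum, ← Finset.sum_add_distrib]
    apply Finset.sum_congr rfl; intro i _; ring
  have hP0 : ∀ i j : Fin n, v i * u j
      = (if (i : ℕ) < (j : ℕ) then v i * u j else 0)
        + (if (j : ℕ) < (i : ℕ) then v i * u j else 0)
        + (if i = j then v i * u j else 0) := by
    intro i j
    rcases lt_trichotomy (i : ℕ) (j : ℕ) with h | h | h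
    · have hne : i ≠ j := fun e => by simp [e] at h
      rw [if_pos h, if_neg (by omega), if_neg hne]; ring
    · have heq : i = j := Fin.ext h
      rw [if_neg (by omega), if_neg (by omega), if_pos heq]; ring
    · have hne : i ≠ j := fun e => by simp [e] at h
      rw [if_neg (by omega), if_pos h, if_neg hne]; ring
  have hP : (∑ i, v i) * (∑ i, u i)
      = (∑ i : Fin n, ∑ j : Fin n, (if (i : ℕ) < (j : ℕ) then v i * u j else 0))
        + (∑ i : Fin n, ∑ j : Fin n, (if (j : ℕ) < (i : ℕ) then v i * u j else 0))
        + (∑ i : Fin n, ∑ j : Fin n, (if i = j then v i * u j else 0)) := by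
    rw [Finset.sum_mul_sum, ← Finset.sum_add_distrib, ← Finset.sum_add_distrib]
    apply Finset.sum_congr rfl; intro i _
    rw [← Finset.sum_add_distrib, ← Finset.sum_add_distrib]
    exact Finset.sum_congr rfl fun j _ => hP0 i j
  have hZ : (∑ i : Fin n, ∑ j : Fin n, (if i = j then v i * u j else 0))
      = ∑ i : Fin n, v i * u i := by
    apply Finset.sum_congr rfl; intro i _; simp
  have hD : (∑ i : Fin n, ∑ j : Fin n, (if (j : ℕ) < (i : ℕ) then v j * u i - v i * u j else 0))
      = (∑ i : Fin n, ∑ j : Fin n, (if (j : ℕ) < (i : ℕ) then v j * u i else 0))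
        - (∑ i : Fin n, ∑ j : Fin n, (if (j : ℕ) < (i : ℕ) then v i * u j else 0)) := by
    rw [← Finset.sum_sub_distrib]
    apply Finset.sum_congr rfl; intro i _
    rw [← Finset.sum_sub_distrib]
    apply Finset.sum_congr rfl; intro j _
    split <;> ring
  have hC : (∑ i : Fin n, ∑ j : Fin n, (if (i : ℕ) < (j : ℕ) then v i * u j else 0))
      = (∑ i : Fin n, ∑ j : Fin n, (if (j : ℕ) < (i : ℕ) then v j * u i else 0)) :=
    Finset.sum_comm
  linarith

lemma capArea_eq {n : ℕ} (y w : Fin n → ℝ) (W T : ℝ)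
    (hW : W = ∑ i, w i) (hT : T = ∑ i, w i * y i)
    (hT0 : T ≠ 0) (hW0 : W ≠ 0) (σ : Equiv.Perm (Fin n)) :
    capArea y w W T σ = (1 / (2 * T * W)) *
      ∑ a : Fin n, ∑ b : Fin n,
        (if ((σ.symm b : Fin n) : ℕ) < ((σ.symm a : Fin n) : ℕ)
          then w b * w a * (y b - y a) else 0) := by
  have hsu : ∑ i : Fin n, w (σ i) = W := by rw [hW]; exact Equiv.sum_comp σ w
  have hsv : ∑ i : Fin n, w (σ i) * y (σ i) = T := by
    rw [hT]; exact Equiv.sum_comp σ (fun i => w i * y i)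
  have stepA : capArea y w W T σ
      = (1 / (2 * T * W)) * (∑ i : Fin n,
          (2 * psum (fun j => w (σ j) * y (σ j)) ↑i + (w (σ i) * y (σ i))) * w (σ i)) - 1 / 2 := by
    unfold capArea
    rw [← Fin.sum_univ_eq_sum_range, Finset.mul_sum]
    congr 1
    apply Finset.sum_congr rfl
    intro i _
    rw [psum_succ, psum_succ]
    field_simp
    ring
  have hre : (∑ i : Fin n, ∑ j : Fin n,
      (if (j : ℕ) < (i : ℕ)
        then (w (σ j) * y (σ j)) * w (σ i) - (w (σ i) * y (σ i)) * w (σ j) else 0))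
      = ∑ a : Fin n, ∑ b : Fin n,
        (if ((σ.symm b : Fin n) : ℕ) < ((σ.symm a : Fin n) : ℕ)
          then w b * w a * (y b - y a) else 0) := by
    have step1 : ∀ i j : Fin n,
        (if (j : ℕ) < (i : ℕ)
          then (w (σ j) * y (σ j)) * w (σ i) - (w (σ i) * y (σ i)) * w (σ j) else 0)
        = (if (j : ℕ) < (i : ℕ) then w (σ j) * w (σ i) * (y (σ j) - y (σ i)) else 0) := by
      intro i j; split <;> ring
    simp_rw [step1]
    have h1 : ∀ i : Fin n,
        (∑ j : Fin n, if (j : ℕ) < (i : ℕ) then w (σ j) * w (σ i) * (y (σ j) - y (σ i)) else 0)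
          = ∑ b : Fin n, if ((σ.symm b : Fin n) : ℕ) < (i : ℕ)
              then w b * w (σ i) * (y b - y (σ i)) else 0 := by
      intro i
      rw [← Equiv.sum_comp σ (fun b => if ((σ.symm b : Fin n) : ℕ) < (i : ℕ)
          then w b * w (σ i) * (y b - y (σ i)) else 0)]
      simp
    simp_rw [h1]
    rw [← Equiv.sum_comp σ (fun a => ∑ b : Fin n,
        if ((σ.symm b : Fin n) : ℕ) < ((σ.symm a : Fin n) : ℕ)
          then w b * w a * (y b - y a) else 0)]
    simp
  rw [stepA, sum_core (fun j => w (σ j)) (fun j => w (σ j) * y (σ j)), hsu, hsv, hre]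
  field_simp
  ring

lemma pair_down {n : ℕ} (m y w : Fin n → ℝ) (σ : Equiv.Perm (Fin n))
    (h : SortDown m y σ) (a b : Fin n) :
    (if ((σ.symm b : Fin n) : ℕ) < ((σ.symm a : Fin n) : ℕ)
      then w b * w a * (y b - y a) else 0)
    = (if m a < m b ∨ (m a = m b ∧ y a < y b) then w b * w a * (y b - y a) else 0) := by
  obtain ⟨h1, h2⟩ := h
  have key : ∀ p q : Fin n, σ.symm p ≤ σ.symm q → m q ≤ m p := by
    intro p q hpq
    have := h1 hpq
    simpa using this
  by_cases hc : m a < m b ∨ (m a = m b ∧ y a < y b)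
  · rw [if_pos hc, if_pos]
    rcases lt_trichotomy ((σ.symm b : Fin n) : ℕ) ((σ.symm a : Fin n) : ℕ) with hlt | heq | hgt
    · exact hlt
    · exfalso
      have hab : b = a := σ.symm.injective (Fin.ext heq)
      rcases hc with h' | ⟨_, h'⟩ <;> rw [hab] at h' <;> exact lt_irrefl _ h'
    · exfalso
      have hfin : σ.symm a < σ.symm b := Fin.lt_def.mpr hgt
      have hm : m b ≤ m a := key a b (le_of_lt hfin)
      rcases hc with h' | ⟨he, hy⟩
      · linarith
      · have hyy : y b ≤ y a := by
          have := h2 (σ.symm a) (σ.symm b) hfin (by simpa using he)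
          simpa using this
        linarith
  · by_cases hlt : ((σ.symm b : Fin n) : ℕ) < ((σ.symm a : Fin n) : ℕ)
    · rw [if_pos hlt, if_neg hc]
      push_neg at hc
      have hfin : σ.symm b < σ.symm a := Fin.lt_def.mpr hlt
      have hm1 : m a ≤ m b := key b a (le_of_lt hfin)
      have hme : m a = m b := le_antisymm hm1 hc.1
      have hy1 : y a ≤ y b := by
        have := h2 (σ.symm b) (σ.symm a) hfin (by simpa using hme.symm)
        simpa using this
      have hy2 : y b ≤ y a := hc.2 hme
      have hz : y b - y a = 0 := by linarith
      rw [hz, mul_zero]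
    · rw [if_neg hlt, if_neg hc]

lemma pair_up {n : ℕ} (m y w : Fin n → ℝ) (σ : Equiv.Perm (Fin n))
    (h : SortUp m y σ) (a b : Fin n) :
    (if ((σ.symm b : Fin n) : ℕ) < ((σ.symm a : Fin n) : ℕ)
      then w b * w a * (y b - y a) else 0)
    = (if m a < m b ∨ (m a = m b ∧ y b < y a) then w b * w a * (y b - y a) else 0) := by
  obtain ⟨h1, h2⟩ := h
  have key : ∀ p q : Fin n, σ.symm p ≤ σ.symm q → m q ≤ m p := by
    intro p q hpq
    have := h1 hpq
    simpa using this
  by_cases hc : m a < m b ∨ (m a = m b ∧ y b < y a)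
  · rw [if_pos hc, if_pos]
    rcases lt_trichotomy ((σ.symm b : Fin n) : ℕ) ((σ.symm a : Fin n) : ℕ) with hlt | heq | hgt
    · exact hlt
    · exfalso
      have hab : b = a := σ.symm.injective (Fin.ext heq)
      rcases hc with h' | ⟨_, h'⟩ <;> rw [hab] at h' <;> exact lt_irrefl _ h'
    · exfalso
      have hfin : σ.symm a < σ.symm b := Fin.lt_def.mpr hgt
      have hm : m b ≤ m a := key a b (le_of_lt hfin)
      rcases hc with h' | ⟨he, hy⟩
      · linarith
      · have hyy : y a ≤ y b := by
          have := h2 (σ.symm a) (σ.symm b) hfin (by simpa using he)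
          simpa using this
        linarith
  · by_cases hlt : ((σ.symm b : Fin n) : ℕ) < ((σ.symm a : Fin n) : ℕ)
    · rw [if_pos hlt, if_neg hc]
      push_neg at hc
      have hfin : σ.symm b < σ.symm a := Fin.lt_def.mpr hlt
      have hm1 : m a ≤ m b := key b a (le_of_lt hfin)
      have hme : m a = m b := le_antisymm hm1 hc.1
      have hy1 : y b ≤ y a := by
        have := h2 (σ.symm b) (σ.symm a) hfin (by simpa using hme.symm)
        simpa using this
      have hy2 : y a ≤ y b := hc.2 hme
      have hz : y b - y a = 0 := by linarith
      rw [hz, mul_zero]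
    · rw [if_neg hlt, if_neg hc]

lemma capArea_down_congr {n : ℕ} (m y w : Fin n → ℝ) (W T : ℝ)
    (hW : W = ∑ i, w i) (hT : T = ∑ i, w i * y i)
    (hT0 : T ≠ 0) (hW0 : W ≠ 0) (σ σ' : Equiv.Perm (Fin n))
    (h : SortDown m y σ) (h' : SortDown m y σ') :
    capArea y w W T σ = capArea y w W T σ' := by
  rw [capArea_eq y w W T hW hT hT0 hW0 σ, capArea_eq y w W T hW hT hT0 hW0 σ']
  congr 1
  apply Finset.sum_congr rfl; intro a _
  apply Finset.sum_congr rfl; intro b _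
  rw [pair_down m y w σ h a b, pair_down m y w σ' h' a b]

lemma capArea_up_congr {n : ℕ} (m y w : Fin n → ℝ) (W T : ℝ)
    (hW : W = ∑ i, w i) (hT : T = ∑ i, w i * y i)
    (hT0 : T ≠ 0) (hW0 : W ≠ 0) (σ σ' : Equiv.Perm (Fin n))
    (h : SortUp m y σ) (h' : SortUp m y σ') :
    capArea y w W T σ = capArea y w W T σ' := by
  rw [capArea_eq y w W T hW hT hT0 hW0 σ, capArea_eq y w W T hW hT hT0 hW0 σ']
  congr 1
  apply Finset.sum_congr rfl; intro a _
  apply Finset.sum_congr rfl; intro b _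
  rw [pair_up m y w σ h a b, pair_up m y w σ' h' a b]

/-- for strictly increasing `g`, a permutation sorts `m` decreasingly with a
given tie suborder iff it does so for `g ∘ m`; consequently the Gini score is invariant:
`Gini(y, g(m), w) = Gini(y, m, w)`; in particular shifts `a + m` give the same Gini score. -/
theorem stmt18 (n : ℕ) (y m w : Fin n → ℝ) (hw : ∀ i, 0 < w i)
    (W T : ℝ) (hW : W = ∑ i, w i) (hT : T = ∑ i, w i * y i) (hTpos : 0 < T)
    (g : ℝ → ℝ) (hg : StrictMono g)
    (τ : Equiv.Perm (Fin n)) (hτ : Antitone (fun i : Fin n => y (τ i)))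
    (B : ℝ) (hB : B = capArea y w W T τ) :
    (∀ σ : Equiv.Perm (Fin n),
        (SortDown m y σ ↔ SortDown (fun i => g (m i)) y σ) ∧
        (SortUp m y σ ↔ SortUp (fun i => g (m i)) y σ)) ∧
    (∀ σd σu σd' σu' : Equiv.Perm (Fin n),
      SortDown m y σd → SortUp m y σu →
      SortDown (fun i => g (m i)) y σd' → SortUp (fun i => g (m i)) y σu' →
        (capArea y w W T σd' + capArea y w W T σu') / (2 * B)
          = (capArea y w W T σd + capArea y w W T σu) / (2 * B)) ∧
    (∀ a : ℝ, ∀ σd σu σd' σu' : Equiv.Perm (Fin n),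
      SortDown m y σd → SortUp m y σu →
      SortDown (fun i => a + m i) y σd' → SortUp (fun i => a + m i) y σu' →
        (capArea y w W T σd' + capArea y w W T σu') / (2 * B)
          = (capArea y w W T σd + capArea y w W T σu) / (2 * B)) := by
  have hT0 : T ≠ 0 := ne_of_gt hTpos
  have hne : (Finset.univ : Finset (Fin n)).Nonempty := by
    by_contra hcon
    rw [Finset.not_nonempty_iff_eq_empty] at hcon
    rw [hT, hcon, Finset.sum_empty] at hTpos
    exact lt_irrefl 0 hTpos
  have hW0 : W ≠ 0 := by
    have : 0 < W := hW ▸ Finset.sum_pos (fun i _ => hw i) hne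
    exact ne_of_gt this
  have hiff : ∀ (f : ℝ → ℝ), StrictMono f → ∀ σ : Equiv.Perm (Fin n),
      (SortDown m y σ ↔ SortDown (fun i => f (m i)) y σ) ∧
      (SortUp m y σ ↔ SortUp (fun i => f (m i)) y σ) := by
    intro f hf σ
    constructor
    · constructor
      · rintro ⟨h1, h2⟩
        exact ⟨fun i j hij => hf.monotone (h1 hij),
               fun j k hjk he => h2 j k hjk (hf.injective he)⟩
      · rintro ⟨h1, h2⟩
        exact ⟨fun i j hij => hf.le_iff_le.mp (h1 hij),
               fun j k hjk he => h2 j k hjk (congrArg f he)⟩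
    · constructor
      · rintro ⟨h1, h2⟩
        exact ⟨fun i j hij => hf.monotone (h1 hij),
               fun j k hjk he => h2 j k hjk (hf.injective he)⟩
      · rintro ⟨h1, h2⟩
        exact ⟨fun i j hij => hf.le_iff_le.mp (h1 hij),
               fun j k hjk he => h2 j k hjk (congrArg f he)⟩
  refine ⟨hiff g hg, ?_, ?_⟩
  · intro σd σu σd' σu' hd hu hd' hu'
    have hd'' : SortDown m y σd' := ((hiff g hg σd').1).mpr hd'
    have hu'' : SortUp m y σu' := ((hiff g hg σu').2).mpr hu'
    rw [capArea_down_congr m y w W T hW hT hT0 hW0 σd' σd hd'' hd,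
        capArea_up_congr m y w W T hW hT hT0 hW0 σu' σu hu'' hu]
  · intro a σd σu σd' σu' hd hu hd' hu'
    have hfa : StrictMono (fun x : ℝ => a + x) := fun p q h => (add_lt_add_iff_left a).mpr h
    have hd'' : SortDown m y σd' := ((hiff _ hfa σd').1).mpr hd'
    have hu'' : SortUp m y σu' := ((hiff _ hfa σu').2).mpr hu'
    rw [capArea_down_congr m y w W T hW hT hT0 hW0 σd' σd hd'' hd,
        capArea_up_congr m y w W T hW hT hT0 hW0 σu' σu hu'' hu]
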